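/- Comparison of fractional mean curvatures: let E ⊆ F ⊆ ℝⁿ and x₀ ∈ ∂E ∩ ∂F. Then for every ρ > 0, I_s^ρ[E](x₀) ≥ I_s^ρ[F](x₀). Moreover, if liminf_{ρ→0⁺} I_s^ρ[F](x₀) ≥ a and limsup_{ρ→0⁺} I_s^ρ[E](x₀) ≤ a for some a ∈ ℝ, then E = F (up to measure zero), the principal values exist, and I_s[E](x₀) = a. -/

import Mathlib

/-!
Since `E ⊆ F`, the integrand of `I_s^ρ[E] - I_s^ρ[F]` is `2 χ_{F \ E}(y) / |y - x₀|^{n+s} ≥ 0`,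
which gives the comparison, and this difference grows as `ρ` decreases. Under the two
one-sided bounds it is eventually below every `ε > 0`, so it vanishes for every `ρ > 0`: the set
`F \ E` is null off every ball around `x₀`, hence null. Then `E` and `F` have the same truncated
curvatures, which are squeezed to `a`.
-/

open MeasureTheory Filter Metric Topology
open scoped symmDiff

/-- The truncated `s`-fractional mean curvature
`I_s^ρ[E](q) = ∫_{ℝⁿ \ B_ρ(q)} (χ_{ℝⁿ\E}(y) − χ_E(y))/|y − q|^{n+s} dy`. -/
noncomputable def fracCurvTrunc (n : ℕ) (s : ℝ) (E : Set (EuclideanSpace ℝ (Fin n)))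
    (q : EuclideanSpace ℝ (Fin n)) (ρ : ℝ) : ℝ :=
  ∫ y in (ball q ρ)ᶜ,
    (Eᶜ.indicator (fun _ => (1 : ℝ)) y - E.indicator (fun _ => (1 : ℝ)) y) /
      ‖y - q‖ ^ ((n : ℝ) + s)

open Set Module

lemma nontrivial_of_mem_frontier {X : Type*} [TopologicalSpace X] {s : Set X} {x : X}
    (hx : x ∈ frontier s) : Nontrivial X := by
  by_contra h
  rw [not_nontrivial_iff_subsingleton] at h
  simp at hx

lemma measure_eq_zero_of_forall_compl_ball_inter {X : Type*} [MetricSpace X] [MeasurableSpace X]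
    {μ : Measure X} [NullSingletonClass μ] {S : Set X} (x : X)
    (h : ∀ ρ > (0 : ℝ), μ ((ball x ρ)ᶜ ∩ S) = 0) : μ S = 0 := by
  rw [← measure_sdiff_null (measure_singleton x)]
  refine measure_mono_null (fun y hy => ?_)
    (measure_iUnion_null fun k : ℕ => h (1 / (k + 1)) (by positivity))
  obtain ⟨k, hk⟩ := exists_nat_one_div_lt (dist_pos.2 hy.2)
  exact mem_iUnion.2 ⟨k, not_lt.2 hk.le, hy.1⟩

section Integrability

variable {V : Type*} [NormedAddCommGroup V] [NormedSpace ℝ V] [FiniteDimensional ℝ V]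
  [MeasurableSpace V] [BorelSpace V] {μ : Measure V} [μ.IsAddHaarMeasure]

lemma integrableOn_compl_ball_rpow_neg {r : ℝ} (hr : (finrank ℝ V : ℝ) < r) (q : V) {ρ : ℝ}
    (hρ : 0 < ρ) : IntegrableOn (fun y => ‖y - q‖ ^ (-r)) (ball q ρ)ᶜ μ := by
  have hr0 : 0 ≤ r := (Nat.cast_nonneg _).trans hr.le
  have hc : 0 < 1 + 1 / ρ := by positivity
  have hmaj := ((integrable_one_add_norm (μ := μ) hr).comp_sub_right q).const_mul ((1 + 1 / ρ) ^ r)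
  refine hmaj.integrableOn.mono' (Measurable.aestronglyMeasurable (by fun_prop))
    ((ae_restrict_iff' measurableSet_ball.compl).2 (ae_of_all _ fun y hy => ?_))
  set z := ‖y - q‖
  have hz : ρ ≤ z := by simpa [dist_eq_norm] using hy
  -- off the ball, `1 + z ≤ (1 + 1/ρ) z`, so `(1 + z) ^ (-r)` dominates `z ^ (-r)` up to a constant
  have hquot : (1 + z) / (1 + 1 / ρ) ≤ z := by
    rw [div_le_iff₀ hc, mul_add, mul_one_div, mul_one, add_comm]
    gcongr
    exact (one_le_div hρ).2 hz
  rw [Real.norm_of_nonneg (by positivity)]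
  calc z ^ (-r) ≤ ((1 + z) / (1 + 1 / ρ)) ^ (-r) :=
        Real.rpow_le_rpow_of_nonpos (by positivity) hquot (by linarith)
    _ = (1 + 1 / ρ) ^ r * (1 + z) ^ (-r) := by
        rw [Real.div_rpow (by positivity) hc.le, Real.rpow_neg hc.le, div_inv_eq_mul, mul_comm]

lemma integrableOn_compl_ball_div_rpow {r : ℝ} (hr : (finrank ℝ V : ℝ) < r) (q : V) {ρ : ℝ}
    (hρ : 0 < ρ) {g : V → ℝ} {c : ℝ} (hg : AEStronglyMeasurable g μ) (hgc : ∀ y, ‖g y‖ ≤ c) :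
    IntegrableOn (fun y => g y / ‖y - q‖ ^ r) (ball q ρ)ᶜ μ := by
  have := (integrableOn_compl_ball_rpow_neg hr q hρ).bdd_mul hg.restrict (ae_of_all _ hgc)
  simpa [IntegrableOn, Real.rpow_neg (norm_nonneg _), div_eq_mul_inv] using this

end Integrability

section FracCurv

variable {n : ℕ} {s : ℝ} {E F : Set (EuclideanSpace ℝ (Fin n))}

lemma indicator_compl_sub_indicator_sub_of_subset (hEF : E ⊆ F) (y : EuclideanSpace ℝ (Fin n)) :
    (Eᶜ.indicator (fun _ => (1 : ℝ)) y - E.indicator (fun _ => (1 : ℝ)) y) -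
        (Fᶜ.indicator (fun _ => (1 : ℝ)) y - F.indicator (fun _ => (1 : ℝ)) y) =
      (F \ E).indicator (fun _ => 2) y := by
  by_cases hyE : y ∈ E
  · simp [hyE, hEF hyE]
  · by_cases hyF : y ∈ F <;> norm_num [hyE, hyF]

lemma integrableOn_fracCurvTrunc_integrand (hs : 0 < s) (hE : MeasurableSet E)
    (q : EuclideanSpace ℝ (Fin n)) {ρ : ℝ} (hρ : 0 < ρ) :
    IntegrableOn
      (fun y => (Eᶜ.indicator (fun _ => (1 : ℝ)) y - E.indicator (fun _ => (1 : ℝ)) y) /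
        ‖y - q‖ ^ ((n : ℝ) + s)) (ball q ρ)ᶜ := by
  refine integrableOn_compl_ball_div_rpow (by simpa using hs) q hρ (c := 1)
    (by fun_prop (disch := measurability)) fun y => ?_
  by_cases hy : y ∈ E <;> simp [hy]

lemma integrableOn_compl_ball_inter_two_div_rpow (hs : 0 < s) (q : EuclideanSpace ℝ (Fin n))
    {ρ : ℝ} (hρ : 0 < ρ) (S : Set (EuclideanSpace ℝ (Fin n))) :
    IntegrableOn (fun y => 2 / ‖y - q‖ ^ ((n : ℝ) + s)) ((ball q ρ)ᶜ ∩ S) :=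
  (integrableOn_compl_ball_div_rpow (by simpa using hs) q hρ (c := 2) aestronglyMeasurable_const
    fun _ => by norm_num).mono_set inter_subset_left

lemma fracCurvTrunc_sub_eq (hs : 0 < s) (hE : MeasurableSet E) (hF : MeasurableSet F)
    (hEF : E ⊆ F) (q : EuclideanSpace ℝ (Fin n)) {ρ : ℝ} (hρ : 0 < ρ) :
    fracCurvTrunc n s E q ρ - fracCurvTrunc n s F q ρ =
      ∫ y in (ball q ρ)ᶜ ∩ (F \ E), 2 / ‖y - q‖ ^ ((n : ℝ) + s) := by
  rw [fracCurvTrunc, fracCurvTrunc,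
    ← integral_sub (integrableOn_fracCurvTrunc_integrand hs hE q hρ)
      (integrableOn_fracCurvTrunc_integrand hs hF q hρ),
    ← setIntegral_indicator (hF.diff hE)]
  refine setIntegral_congr_fun measurableSet_ball.compl fun y _ => ?_
  rw [div_sub_div_same, indicator_compl_sub_indicator_sub_of_subset hEF]
  by_cases hy : y ∈ F \ E <;> simp [hy]

lemma fracCurvTrunc_sub_nonneg (hs : 0 < s) (hE : MeasurableSet E) (hF : MeasurableSet F)
    (hEF : E ⊆ F) (q : EuclideanSpace ℝ (Fin n)) {ρ : ℝ} (hρ : 0 < ρ) :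
    0 ≤ fracCurvTrunc n s E q ρ - fracCurvTrunc n s F q ρ := by
  rw [fracCurvTrunc_sub_eq hs hE hF hEF q hρ]
  exact setIntegral_nonneg (measurableSet_ball.compl.inter (hF.diff hE)) fun y _ => by positivity

lemma fracCurvTrunc_le_of_subset (hs : 0 < s) (hE : MeasurableSet E) (hF : MeasurableSet F)
    (hEF : E ⊆ F) (q : EuclideanSpace ℝ (Fin n)) {ρ : ℝ} (hρ : 0 < ρ) :
    fracCurvTrunc n s F q ρ ≤ fracCurvTrunc n s E q ρ :=
  sub_nonneg.1 (fracCurvTrunc_sub_nonneg hs hE hF hEF q hρ)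

lemma fracCurvTrunc_sub_le_of_le (hs : 0 < s) (hE : MeasurableSet E) (hF : MeasurableSet F)
    (hEF : E ⊆ F) (q : EuclideanSpace ℝ (Fin n)) {ρ ρ' : ℝ} (hρ' : 0 < ρ') (hρρ' : ρ' ≤ ρ) :
    fracCurvTrunc n s E q ρ - fracCurvTrunc n s F q ρ ≤
      fracCurvTrunc n s E q ρ' - fracCurvTrunc n s F q ρ' := by
  rw [fracCurvTrunc_sub_eq hs hE hF hEF q (hρ'.trans_le hρρ'),
    fracCurvTrunc_sub_eq hs hE hF hEF q hρ']
  exact setIntegral_mono_set (integrableOn_compl_ball_inter_two_div_rpow hs q hρ' _)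
    (ae_of_all _ fun y => by positivity)
    (ae_of_all _ (inter_subset_inter_left _ (compl_subset_compl.2 (ball_subset_ball hρρ'))))

lemma volume_compl_ball_inter_eq_zero (hs : 0 < s) {S : Set (EuclideanSpace ℝ (Fin n))}
    (q : EuclideanSpace ℝ (Fin n)) {ρ : ℝ} (hρ : 0 < ρ)
    (h : ∫ y in (ball q ρ)ᶜ ∩ S, 2 / ‖y - q‖ ^ ((n : ℝ) + s) = 0) :
    volume ((ball q ρ)ᶜ ∩ S) = 0 := by
  have hsupp : Function.support (fun y => 2 / ‖y - q‖ ^ ((n : ℝ) + s)) ∩ ((ball q ρ)ᶜ ∩ S) =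
      (ball q ρ)ᶜ ∩ S := by
    refine inter_eq_right.2 fun y hy => ?_
    have : 0 < ‖y - q‖ := hρ.trans_le (by simpa [dist_eq_norm] using hy.1)
    exact (by positivity : 0 < 2 / ‖y - q‖ ^ ((n : ℝ) + s)).ne'
  by_contra hne
  refine ((setIntegral_pos_iff_support_of_nonneg_ae (ae_of_all _ fun y => by positivity)
    (integrableOn_compl_ball_inter_two_div_rpow hs q hρ S)).2 ?_).ne' h
  rw [hsupp]
  exact pos_iff_ne_zero.2 hne

lemma volume_diff_eq_zero_of_fracCurvTrunc_sub_eventually_lt [Nontrivial (EuclideanSpace ℝ (Fin n))]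
    (hs : 0 < s) (hE : MeasurableSet E) (hF : MeasurableSet F) (hEF : E ⊆ F)
    (q : EuclideanSpace ℝ (Fin n))
    (h : ∀ ε > (0 : ℝ), ∀ᶠ ρ in 𝓝[>] (0 : ℝ),
      fracCurvTrunc n s E q ρ - fracCurvTrunc n s F q ρ < ε) :
    volume (F \ E) = 0 := by
  refine measure_eq_zero_of_forall_compl_ball_inter q fun ρ hρ =>
    volume_compl_ball_inter_eq_zero hs q hρ ?_
  rw [← fracCurvTrunc_sub_eq hs hE hF hEF q hρ]
  refine le_antisymm (le_of_forall_pos_lt_add fun ε hε => ?_)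
    (fracCurvTrunc_sub_nonneg hs hE hF hEF q hρ)
  obtain ⟨ρ', hρ'ε, hρ'⟩ := ((h ε hε).and (Ioo_mem_nhdsGT hρ)).exists
  calc fracCurvTrunc n s E q ρ - fracCurvTrunc n s F q ρ
      ≤ fracCurvTrunc n s E q ρ' - fracCurvTrunc n s F q ρ' :=
        fracCurvTrunc_sub_le_of_le hs hE hF hEF q hρ'.1 hρ'.2.le
    _ < 0 + ε := by rwa [zero_add]

lemma fracCurvTrunc_congr_ae (h : E =ᵐ[volume] F) (q : EuclideanSpace ℝ (Fin n)) :
    fracCurvTrunc n s E q = fracCurvTrunc n s F q := by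
  funext ρ
  refine integral_congr_ae (ae_restrict_of_ae ?_)
  filter_upwards [indicator_ae_eq_of_ae_eq_set (f := fun _ => (1 : ℝ)) h,
    indicator_ae_eq_of_ae_eq_set (f := fun _ => (1 : ℝ)) h.compl] with y hy hyc
  rw [hy, hyc]

end FracCurv

/-- Comparison of fractional mean curvatures: if `E ⊆ F` and `x₀ ∈ ∂E ∩ ∂F`, then
`I_s^ρ[E](x₀) ≥ I_s^ρ[F](x₀)` for every `ρ > 0`. Moreover, if
`liminf_{ρ→0⁺} I_s^ρ[F](x₀) ≥ a` and `limsup_{ρ→0⁺} I_s^ρ[E](x₀) ≤ a`, then `E = F` up to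
measure zero, the principal values exist and both equal `a`. -/
theorem fracCurv_comparison (n : ℕ) (s : ℝ) (hs : s ∈ Set.Ioo (0 : ℝ) 1)
    (E F : Set (EuclideanSpace ℝ (Fin n))) (hE : MeasurableSet E) (hF : MeasurableSet F)
    (hEF : E ⊆ F) (x₀ : EuclideanSpace ℝ (Fin n))
    (hx : x₀ ∈ frontier E ∩ frontier F) :
    (∀ ρ > (0 : ℝ), fracCurvTrunc n s F x₀ ρ ≤ fracCurvTrunc n s E x₀ ρ) ∧
      ∀ a : ℝ,
        (∀ ε > (0 : ℝ), ∀ᶠ ρ in 𝓝[>] (0 : ℝ), a - ε < fracCurvTrunc n s F x₀ ρ) →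
        (∀ ε > (0 : ℝ), ∀ᶠ ρ in 𝓝[>] (0 : ℝ), fracCurvTrunc n s E x₀ ρ < a + ε) →
        volume (E ∆ F) = 0 ∧
          Tendsto (fracCurvTrunc n s E x₀) (𝓝[>] (0 : ℝ)) (𝓝 a) ∧
          Tendsto (fracCurvTrunc n s F x₀) (𝓝[>] (0 : ℝ)) (𝓝 a) := by
  refine ⟨fun ρ hρ => fracCurvTrunc_le_of_subset hs.1 hE hF hEF x₀ hρ, fun a haF haE => ?_⟩
  have := nontrivial_of_mem_frontier hx.1
  have hFE : volume (F \ E) = 0 :=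
    volume_diff_eq_zero_of_fracCurvTrunc_sub_eventually_lt hs.1 hE hF hEF x₀ fun ε hε => by
      filter_upwards [haE (ε / 2) (half_pos hε), haF (ε / 2) (half_pos hε)] with ρ hEρ hFρ
      linarith
  have hae : E =ᵐ[volume] F := ae_eq_set.2 ⟨by simp [sdiff_eq_empty.2 hEF], hFE⟩
  have hcurv : fracCurvTrunc n s E x₀ = fracCurvTrunc n s F x₀ := fracCurvTrunc_congr_ae hae x₀
  have hlim : Tendsto (fracCurvTrunc n s F x₀) (𝓝[>] 0) (𝓝 a) := by
    refine tendsto_order.2 ⟨fun b hb => ?_, fun b hb => ?_⟩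
    · simpa using haF (a - b) (sub_pos.2 hb)
    · simpa [← hcurv] using haE (b - a) (sub_pos.2 hb)
  exact ⟨measure_symmDiff_eq_zero_iff.2 hae, hcurv ▸ hlim, hlim⟩
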